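/- arXiv:1609.05194 — 7 statements merged into one kernel-verified Lean document; each statement's English description precedes it below -/
import Mathlib

section
/- Let p be a stochastic tournament on a finite set V and suppose there exists a vertex r in V such that every triangle containing r is balanced, i.e., for all distinct x, y in V \ {r}, p r x * p x y * p y r = p r y * p y x * p x r. Then p admits a Bradley–Terry score: there exists a : V → ℝ with a x > 0 for all x and p x y / p y x = a x / a y for all distinct x, y in V. -/
/-- If every triangle containing some fixed vertex `r` is balanced, then the
stochastic tournament admits a Bradley–Terry score. -/
theorem balanced_at_vertex_implies_bradleyTerry {V : Type*} [Fintype V]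
    (p : V → V → ℝ)
    (hp : ∀ x y : V, x ≠ y → 0 < p x y ∧ p x y < 1 ∧ p x y + p y x = 1)
    (r : V)
    (hr : ∀ x y : V, x ≠ y → x ≠ r → y ≠ r →
      p r x * p x y * p y r = p r y * p y x * p x r) :
    ∃ a : V → ℝ, (∀ x, 0 < a x) ∧
      ∀ x y : V, x ≠ y → p x y / p y x = a x / a y := by
  classical
  refine ⟨fun x => if x = r then 1 else p x r / p r x, ?_, ?_⟩
  · intro x
    by_cases hx : x = r
    · simp [hx]
    · simp only [hx, if_neg]
      exact div_pos (hp x r hx).1 (hp r x (Ne.symm hx)).1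
  · intro x y hxy
    by_cases hx : x = r
    · subst hx
      have hy : y ≠ x := Ne.symm hxy
      simp only [if_pos rfl, if_neg hy]
      simp [one_div_div]
    · by_cases hy : y = r
      · subst hy
        simp only [if_pos rfl, if_neg hx]
        simp
      · simp only [if_neg hx, if_neg hy]
        have h := hr x y hxy hx hy
        have h1 := (hp x r hx).1.ne'
        have h2 := (hp r x (Ne.symm hx)).1.ne'
        have h3 := (hp y r hy).1.ne'
        have h4 := (hp r y (Ne.symm hy)).1.ne'
        have h5 := (hp y x (Ne.symm hxy)).1.ne'
        field_simp
        linarith [h]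
end

section
/- Let p be a stochastic tournament on a finite nonempty set V and suppose every triangle of p is balanced, i.e., for all pairwise distinct x, y, z in V, p x y * p y z * p z x = p x z * p z y * p y x. Then p is reversible: there exists π : V → ℝ with π x > 0 for all x, ∑_{x ∈ V} π x = 1, and π x * p x y = π y * p y x for all distinct x, y in V. -/
/-- If every triangle of a stochastic tournament is balanced, then the
tournament is reversible. -/
theorem balanced_triangles_implies_reversible {V : Type*} [Fintype V] [Nonempty V]
    (p : V → V → ℝ)
    (hp : ∀ x y : V, x ≠ y → 0 < p x y ∧ p x y < 1 ∧ p x y + p y x = 1)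
    (hbal : ∀ x y z : V, x ≠ y → x ≠ z → y ≠ z →
      p x y * p y z * p z x = p x z * p z y * p y x) :
    ∃ π : V → ℝ, (∀ x, 0 < π x) ∧ (∑ x, π x) = 1 ∧
      ∀ x y : V, x ≠ y → π x * p x y = π y * p y x := by
  classical
  obtain ⟨o⟩ := ‹Nonempty V›
  set w : V → ℝ := fun x => if x = o then 1 else p o x / p x o with hw
  have hwpos : ∀ x, 0 < w x := by
    intro x
    by_cases h : x = o
    · simp [hw, h]
    · have h1 := (hp o x (Ne.symm h)).1
      have h2 := (hp x o h).1
      simp only [hw, if_neg h]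
      positivity
  have hkey : ∀ x y : V, x ≠ y → w x * p x y = w y * p y x := by
    intro x y hxy
    by_cases hxo : x = o
    · subst hxo
      have h2 := (hp y x (Ne.symm hxy)).1
      simp only [hw, if_pos rfl, if_neg (Ne.symm hxy)]
      field_simp
    · by_cases hyo : y = o
      · subst hyo
        have h2 := (hp x y hxy).1
        simp only [hw, if_pos rfl, if_neg hxy]
        field_simp
      · have hb := hbal o x y (Ne.symm hxo) (Ne.symm hyo) hxy
        have h1 := (hp x o hxo).1
        have h2 := (hp y o hyo).1
        simp only [hw, if_neg hxo, if_neg hyo]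
        field_simp
        nlinarith [hb]
  set S : ℝ := ∑ x, w x with hS
  have hSpos : 0 < S := Finset.sum_pos (fun x _ => hwpos x) ⟨o, Finset.mem_univ o⟩
  refine ⟨fun x => w x / S, fun x => div_pos (hwpos x) hSpos, ?_, ?_⟩
  · rw [← Finset.sum_div, ← hS, div_self hSpos.ne']
  · intro x y hxy
    have := hkey x y hxy
    field_simp
    linarith [this]
end

section
/- Let p be a stochastic tournament on a finite set V and let r be a vertex of V. Then there exists a stochastic tournament p' on V such that: (1) p' is reversible; (2) p' x y = p x y whenever x = r or y = r; and (3) for all distinct x, y in V \ {r}, |p' x y − p x y| ≤ disc(x, y, r), where disc is the discrepancy of the triangle (x, y, r). -/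
/-!
Put weight `w r = 1` on the root and `w x = p r x / p x r` elsewhere, and set
`p' x y = w y / (w x + w y)`. Such a weighted tournament satisfies detailed balance with respect to
the distribution proportional to `w`. The weights are chosen so that the ratio `w x / w r`
equals `p r x / p x r`, which keeps every edge at `r`; on an edge `xy` away from `r` the new value
is exactly the term `p r y * p x r / (p r y * p x r + p y r * p r x)` that `disc p x y r` compares
with `p x y`.
-/

/-- The discrepancy of the triangle `(x, y, z)` of a stochastic tournament `p`. -/
noncomputable def disc {V : Type*} (p : V → V → ℝ) (x y z : V) : ℝ :=
  max |p x y - p z y * p x z / (p z y * p x z + p y z * p z x)|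
    (max |p y z - p y x * p x z / (p y x * p x z + p x y * p z x)|
      |p z x - p y x * p z y / (p y x * p z y + p x y * p y z)|)

noncomputable def weightTournament {V : Type*} (w : V → ℝ) (x y : V) : ℝ := w y / (w x + w y)

section WeightTournament

variable {V : Type*} {w : V → ℝ}

lemma weightTournament_pos (hw : ∀ x, 0 < w x) (x y : V) : 0 < weightTournament w x y := by
  have := hw x
  have := hw y
  unfold weightTournament
  positivity

lemma weightTournament_lt_one (hw : ∀ x, 0 < w x) (x y : V) : weightTournament w x y < 1 := by
  have := hw x
  have := hw y
  rw [weightTournament, div_lt_one (by positivity)]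
  linarith

lemma weightTournament_add_swap (hw : ∀ x, 0 < w x) (x y : V) :
    weightTournament w x y + weightTournament w y x = 1 := by
  have := hw x
  have := hw y
  rw [weightTournament, weightTournament, add_comm (w y), ← add_div, add_comm (w y),
    div_self (by positivity)]

lemma weightTournament_detailed_balance (x y : V) :
    w x * weightTournament w x y = w y * weightTournament w y x := by
  rw [weightTournament, weightTournament, add_comm (w y)]
  ring

lemma exists_stationary_weightTournament [Fintype V] [Nonempty V] (hw : ∀ x, 0 < w x) :
    ∃ π : V → ℝ, (∀ x, 0 < π x) ∧ ∑ x, π x = 1 ∧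
      ∀ x y, π x * weightTournament w x y = π y * weightTournament w y x := by
  have hS : 0 < ∑ x, w x := Finset.sum_pos (fun x _ => hw x) Finset.univ_nonempty
  refine ⟨fun x => w x / ∑ z, w z, fun x => div_pos (hw x) hS, ?_, fun x y => ?_⟩
  · rw [← Finset.sum_div, div_self hS.ne']
  · rw [div_mul_eq_mul_div, div_mul_eq_mul_div, weightTournament_detailed_balance]

end WeightTournament

section StarWeight

variable {V : Type*} [DecidableEq V] (p : V → V → ℝ) (r : V)

noncomputable def starWeight (x : V) : ℝ := if x = r then 1 else p r x / p x r

variable {p r}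

lemma starWeight_pos (hpos : ∀ x y, x ≠ y → 0 < p x y) (x : V) : 0 < starWeight p r x := by
  unfold starWeight
  split_ifs with hx
  · exact one_pos
  · exact div_pos (hpos r x (Ne.symm hx)) (hpos x r hx)

lemma weightTournament_starWeight_of_ne (hpos : ∀ x y, x ≠ y → 0 < p x y) {x y : V}
    (hx : x ≠ r) (hy : y ≠ r) :
    weightTournament (starWeight p r) x y =
      p r y * p x r / (p r y * p x r + p y r * p r x) := by
  have := hpos x r hx
  have := hpos y r hy
  rw [weightTournament, starWeight, starWeight, if_neg hx, if_neg hy]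
  field_simp
  ring

lemma weightTournament_starWeight_root_left
    (hpos : ∀ x y, x ≠ y → 0 < p x y) (hsum : ∀ x y, x ≠ y → p x y + p y x = 1)
    {y : V} (hy : y ≠ r) :
    weightTournament (starWeight p r) r y = p r y := by
  have := hpos y r hy
  have := hsum y r hy
  rw [weightTournament, starWeight, starWeight, if_pos rfl, if_neg hy]
  field_simp
  rw [this, mul_one]

lemma weightTournament_starWeight_root_right
    (hpos : ∀ x y, x ≠ y → 0 < p x y) (hsum : ∀ x y, x ≠ y → p x y + p y x = 1)
    {x : V} (hx : x ≠ r) :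
    weightTournament (starWeight p r) x r = p x r := by
  have := weightTournament_add_swap (starWeight_pos (r := r) hpos) x r
  rw [weightTournament_starWeight_root_left hpos hsum hx] at this
  linarith [hsum x r hx]

end StarWeight

/-- Given any stochastic tournament `p` and vertex `r`, there is a reversible
stochastic tournament `p'` agreeing with `p` on all edges at `r`, and differing
on the edge `xy` by at most the discrepancy of the triangle `(x, y, r)`. -/
theorem exists_reversible_fixing_star {V : Type*} [Fintype V]
    (p : V → V → ℝ)
    (hp : ∀ x y : V, x ≠ y → 0 < p x y ∧ p x y < 1 ∧ p x y + p y x = 1)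
    (r : V) :
    ∃ p' : V → V → ℝ,
      (∀ x y : V, x ≠ y → 0 < p' x y ∧ p' x y < 1 ∧ p' x y + p' y x = 1) ∧
      (∃ π : V → ℝ, (∀ x, 0 < π x) ∧ (∑ x, π x) = 1 ∧
        ∀ x y : V, x ≠ y → π x * p' x y = π y * p' y x) ∧
      (∀ x y : V, x ≠ y → (x = r ∨ y = r) → p' x y = p x y) ∧
      (∀ x y : V, x ≠ y → x ≠ r → y ≠ r → |p' x y - p x y| ≤ disc p x y r) := by
  classical
  have hpos : ∀ x y, x ≠ y → 0 < p x y := fun x y h => (hp x y h).1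
  have hsum : ∀ x y, x ≠ y → p x y + p y x = 1 := fun x y h => (hp x y h).2.2
  have hw := starWeight_pos hpos (r := r)
  have : Nonempty V := ⟨r⟩
  refine ⟨weightTournament (starWeight p r), fun x y _ => ⟨weightTournament_pos hw x y,
    weightTournament_lt_one hw x y, weightTournament_add_swap hw x y⟩, ?_, ?_, ?_⟩
  · obtain ⟨π, hπ, hπ_sum, hbalance⟩ := exists_stationary_weightTournament hw
    exact ⟨π, hπ, hπ_sum, fun x y _ => hbalance x y⟩
  · rintro x y hxy (rfl | rfl)
    · exact weightTournament_starWeight_root_left hpos hsum (Ne.symm hxy)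
    · exact weightTournament_starWeight_root_right hpos hsum hxy
  · intro x y _ hx hy
    rw [weightTournament_starWeight_of_ne hpos hx hy, abs_sub_comm]
    exact le_max_left _ _
end

section
/- Let p be a stochastic tournament on a finite set V with |V| = n ≥ 3 and let ε > 0. Suppose the sum of disc(T) over all unordered triangles T (3-element subsets of V) is at most ε * C(n, 3). Then there exists a reversible stochastic tournament p' on V such that the sum over all unordered pairs {x, y} of distinct vertices of |p x y − p' x y| is strictly less than ε * C(n, 2). -/
open Finset

namespace Finset
variable {α M : Type*} [DecidableEq α] [AddCommMonoid M]

theorem sum_sum_powersetCard_erase_insert (s : Finset α) (k : ℕ) (f : Finset α → M) :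
    ∑ x ∈ s, ∑ T ∈ powersetCard k (s.erase x), f (insert x T) =
      (k + 1) • ∑ T ∈ powersetCard (k + 1) s, f T := by
  calc ∑ x ∈ s, ∑ T ∈ powersetCard k (s.erase x), f (insert x T)
      = ∑ x ∈ s, ∑ T ∈ powersetCard (k + 1) s with x ∈ T, f T := by
        refine sum_congr rfl fun x hx => ?_
        refine sum_nbij' (insert x) (fun T => T.erase x) ?_ ?_ ?_ ?_ (fun _ _ => rfl)
        all_goals intro T hT; simp only [mem_filter, mem_powersetCard] at hT ⊢
        · have hxT : x ∉ T := fun h => by simpa using hT.1 h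
          exact ⟨⟨insert_subset hx (hT.1.trans (erase_subset x s)), by
            rw [card_insert_of_notMem hxT, hT.2]⟩, mem_insert_self x T⟩
        · exact ⟨erase_subset_erase x hT.1.1, by rw [card_erase_of_mem hT.2, hT.1.2]; rfl⟩
        · exact erase_insert fun h => by simpa using hT.1 h
        · exact insert_erase hT.2
    _ = ∑ T ∈ powersetCard (k + 1) s, ∑ x ∈ T, f T := by
        rw [sum_comm' (t' := powersetCard (k + 1) s) (s' := fun T => T)]
        grind
    _ = (k + 1) • ∑ T ∈ powersetCard (k + 1) s, f T := by
        rw [smul_sum]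
        refine sum_congr rfl fun T hT => ?_
        rw [sum_const, (mem_powersetCard.1 hT).2]

theorem sum_sum_sum_erase_eq_six_nsmul (s : Finset α) (f : Finset α → M) :
    ∑ x ∈ s, ∑ y ∈ s.erase x, ∑ z ∈ (s.erase x).erase y, f {x, y, z} =
      6 • ∑ T ∈ powersetCard 3 s, f T := by
  have pairs : ∀ x ∈ s, ∑ y ∈ s.erase x, ∑ z ∈ (s.erase x).erase y, f {x, y, z} =
      2 • ∑ T ∈ powersetCard 2 (s.erase x), f (insert x T) := fun x _ => by
    rw [← sum_sum_powersetCard_erase_insert]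
    refine sum_congr rfl fun y _ => ?_
    rw [powersetCard_one, sum_map]
    rfl
  rw [sum_congr rfl pairs, ← smul_sum, sum_sum_powersetCard_erase_insert, smul_smul]
  rfl

end Finset

theorem Nat.three_mul_choose_three_lt {n : ℕ} (hn : 3 ≤ n) : 3 * n.choose 3 < n * n.choose 2 := by
  have h := Nat.choose_succ_right_eq n 2
  have hpos : 0 < n.choose 2 := Nat.choose_pos (by omega)
  calc 3 * n.choose 3 = n.choose 2 * (n - 2) := by rw [mul_comm]; exact h
    _ < n.choose 2 * n := Nat.mul_lt_mul_of_pos_left (by omega) hpos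
    _ = n * n.choose 2 := mul_comm _ _

section Tournament

variable {V : Type*} {p : V → V → ℝ}

def IsStochasticTournament (p : V → V → ℝ) : Prop :=
  ∀ x y : V, x ≠ y → 0 < p x y ∧ p x y < 1 ∧ p x y + p y x = 1

def IsReversible [Fintype V] (p : V → V → ℝ) : Prop :=
  ∃ π : V → ℝ, (∀ x, 0 < π x) ∧ ∑ x, π x = 1 ∧ ∀ x y : V, x ≠ y → π x * p x y = π y * p y x

theorem IsStochasticTournament.of_pos_of_add_eq_one
    (hpos : ∀ x y : V, x ≠ y → 0 < p x y) (hsum : ∀ x y : V, x ≠ y → p x y + p y x = 1) :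
    IsStochasticTournament p := fun x y hxy =>
  ⟨hpos x y hxy, by linarith [hpos y x hxy.symm, hsum x y hxy], hsum x y hxy⟩

theorem isReversible_of_detailed_balance [Fintype V] [Nonempty V] (w : V → ℝ)
    (hw : ∀ x, 0 < w x) (hbal : ∀ x y : V, x ≠ y → w x * p x y = w y * p y x) :
    IsReversible p := by
  have htot : 0 < ∑ x, w x := sum_pos (fun x _ => hw x) univ_nonempty
  refine ⟨fun x => w x / ∑ x, w x, fun x => div_pos (hw x) htot, ?_, fun x y hxy => ?_⟩
  · rw [← sum_div, div_self htot.ne']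
  · rw [div_mul_eq_mul_div, div_mul_eq_mul_div, hbal x y hxy]

theorem IsStochasticTournament.pos (hp : IsStochasticTournament p) {x y : V}
    (h : x ≠ y) : 0 < p x y :=
  (hp x y h).1

theorem IsStochasticTournament.add_eq_one (hp : IsStochasticTournament p)
    {x y : V} (h : x ≠ y) : p x y + p y x = 1 :=
  (hp x y h).2.2

theorem IsStochasticTournament.mul_add_mul_pos (hp : IsStochasticTournament p)
    {x y z : V} (hx : x ≠ z) (hy : y ≠ z) : 0 < p z y * p x z + p y z * p z x := by
  have := hp.pos hx.symm
  have := hp.pos hy.symm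
  have := hp.pos hx
  have := hp.pos hy
  positivity

variable [DecidableEq V]

/-- Completes each edge `x y` avoiding the hub `z` to the unique value making the triangle `x y z`
reversible; its distance to `p x y` is the first term of `disc p x y z`. -/
noncomputable def starTournament (p : V → V → ℝ) (z : V) (x y : V) : ℝ :=
  if x = z ∨ y = z then p x y else p z y * p x z / (p z y * p x z + p y z * p z x)

variable {z : V}

theorem starTournament_of_eq_or_eq {x y : V} (h : x = z ∨ y = z) :
    starTournament p z x y = p x y := if_pos h

theorem starTournament_of_ne {x y : V} (hx : x ≠ z) (hy : y ≠ z) :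
    starTournament p z x y = p z y * p x z / (p z y * p x z + p y z * p z x) := by
  simp [starTournament, hx, hy]

theorem IsStochasticTournament.starTournament_pos (hp : IsStochasticTournament p) {x y : V}
    (hxy : x ≠ y) : 0 < starTournament p z x y := by
  by_cases h : x = z ∨ y = z
  · rw [starTournament_of_eq_or_eq h]
    exact hp.pos hxy
  · push Not at h
    rw [starTournament_of_ne h.1 h.2]
    exact div_pos (mul_pos (hp.pos h.2.symm) (hp.pos h.1)) (hp.mul_add_mul_pos h.1 h.2)

theorem isStochasticTournament_starTournament (hp : IsStochasticTournament p) (z : V) :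
    IsStochasticTournament (starTournament p z) := by
  refine .of_pos_of_add_eq_one (fun x y => hp.starTournament_pos) fun x y hxy => ?_
  by_cases h : x = z ∨ y = z
  · rw [starTournament_of_eq_or_eq h, starTournament_of_eq_or_eq h.symm]
    exact hp.add_eq_one hxy
  · push Not at h
    have hden : p z x * p y z + p x z * p z y = p z y * p x z + p y z * p z x := by ring
    rw [starTournament_of_ne h.1 h.2, starTournament_of_ne h.2 h.1, hden, ← add_div,
      div_eq_one_iff_eq (hp.mul_add_mul_pos h.1 h.2).ne']
    ring

theorem isReversible_starTournament [Fintype V] (hp : IsStochasticTournament p) (z : V) :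
    IsReversible (starTournament p z) := by
  have : Nonempty V := ⟨z⟩
  refine isReversible_of_detailed_balance (fun x => if x = z then 1 else p z x / p x z)
    (fun x => ?_) fun x y hxy => ?_
  · split_ifs with hx
    · exact one_pos
    · exact div_pos (hp.pos (Ne.symm hx)) (hp.pos hx)
  by_cases hx : x = z
  · subst hx
    have hy : y ≠ x := hxy.symm
    simp only [if_pos, hy, if_false, starTournament_of_eq_or_eq (Or.inl rfl),
      starTournament_of_eq_or_eq (Or.inr rfl), one_mul, div_mul_cancel₀ _ (hp.pos hy).ne']
  by_cases hy : y = z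
  · subst hy
    simp only [if_pos, hx, if_false, starTournament_of_eq_or_eq (Or.inl rfl),
      starTournament_of_eq_or_eq (Or.inr rfl), one_mul, div_mul_cancel₀ _ (hp.pos hx).ne']
  have hden : p z x * p y z + p x z * p z y = p z y * p x z + p y z * p z x := by ring
  simp only [hx, hy, if_false, starTournament_of_ne hx hy, starTournament_of_ne hy hx, hden]
  have := hp.pos hx
  have := hp.pos hy
  have := hp.mul_add_mul_pos hx hy
  field_simp

theorem abs_sub_starTournament_le_disc {x y : V} (hx : x ≠ z) (hy : y ≠ z) :
    |p x y - starTournament p z x y| ≤ disc p x y z := by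
  rw [starTournament_of_ne hx hy]
  exact le_max_left _ _

theorem sum_abs_sub_starTournament_le [Fintype V] (x y : V) :
    ∑ z, |p x y - starTournament p z x y| ≤ ∑ z ∈ (univ.erase x).erase y, disc p x y z := by
  rw [← sum_subset (subset_univ _) fun z _ hz => ?_]
  · refine sum_le_sum fun z hz => ?_
    rw [mem_erase, mem_erase] at hz
    exact abs_sub_starTournament_le_disc hz.2.1.symm hz.1.symm
  · have : x = z ∨ y = z := by simp only [mem_erase, mem_univ, and_true] at hz; tauto
    rw [starTournament_of_eq_or_eq (by tauto), sub_self, abs_zero]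

theorem sum_sum_sum_abs_sub_starTournament_le [Fintype V] :
    ∑ z, ∑ x, ∑ y ∈ univ.erase x, |p x y - starTournament p z x y| ≤
      ∑ x, ∑ y ∈ univ.erase x, ∑ z ∈ (univ.erase x).erase y, disc p x y z := by
  rw [sum_comm]
  refine sum_le_sum fun x _ => ?_
  rw [sum_comm]
  exact sum_le_sum fun y _ => sum_abs_sub_starTournament_le x y

end Tournament

theorem sum_disc_eq_six_mul_sum_powersetCard {V : Type*} [Fintype V] [DecidableEq V]
    (p : V → V → ℝ) (D : Finset V → ℝ)
    (hD : ∀ x y z : V, x ≠ y → x ≠ z → y ≠ z → D {x, y, z} = disc p x y z) :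
    ∑ x, ∑ y ∈ univ.erase x, ∑ z ∈ (univ.erase x).erase y, disc p x y z =
      6 * ∑ T ∈ powersetCard 3 univ, D T := by
  rw [← Nat.cast_ofNat, ← nsmul_eq_mul, ← sum_sum_sum_erase_eq_six_nsmul]
  refine sum_congr rfl fun x _ => sum_congr rfl fun y hy => sum_congr rfl fun z hz => ?_
  simp only [mem_erase] at hy hz
  exact (hD x y z hy.1.symm hz.2.1.symm hz.1.symm).symm

/-- If the total discrepancy over all unordered triangles is at most
`ε * C(n, 3)`, then there is a reversible stochastic tournament `p'` at `L¹`
distance (summed over unordered pairs, i.e. half the ordered pair sum)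
strictly less than `ε * C(n, 2)` from `p`. -/
theorem small_discrepancy_implies_close_to_reversible {V : Type*} [Fintype V]
    [DecidableEq V]
    (p : V → V → ℝ)
    (hp : ∀ x y : V, x ≠ y → 0 < p x y ∧ p x y < 1 ∧ p x y + p y x = 1)
    (n : ℕ) (hn : Fintype.card V = n) (hn3 : 3 ≤ n)
    (ε : ℝ) (hε : 0 < ε)
    (D : Finset V → ℝ)
    (hD : ∀ x y z : V, x ≠ y → x ≠ z → y ≠ z → D {x, y, z} = disc p x y z)
    (hsum : ∑ T ∈ Finset.powersetCard 3 (Finset.univ : Finset V), D T ≤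
      ε * (n.choose 3 : ℝ)) :
    ∃ p' : V → V → ℝ,
      (∀ x y : V, x ≠ y → 0 < p' x y ∧ p' x y < 1 ∧ p' x y + p' y x = 1) ∧
      (∃ π : V → ℝ, (∀ x, 0 < π x) ∧ (∑ x, π x) = 1 ∧
        ∀ x y : V, x ≠ y → π x * p' x y = π y * p' y x) ∧
      (1 / 2) * ∑ x : V, ∑ y ∈ Finset.univ.erase x, |p x y - p' x y|
        < ε * (n.choose 2 : ℝ) := by
  have hchoose : (3 * n.choose 3 : ℝ) < n * n.choose 2 := by
    exact_mod_cast Nat.three_mul_choose_three_lt hn3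
  have htotal : ∑ z, ∑ x, ∑ y ∈ univ.erase x, |p x y - starTournament p z x y| <
      ∑ _z : V, 2 * (ε * n.choose 2) :=
    calc _ ≤ 6 * ∑ T ∈ powersetCard 3 univ, D T :=
          (sum_sum_sum_abs_sub_starTournament_le (p := p)).trans_eq
            (sum_disc_eq_six_mul_sum_powersetCard p D hD)
      _ ≤ 6 * (ε * n.choose 3) := by linarith
      _ < n * (2 * (ε * n.choose 2)) := by nlinarith
      _ = ∑ _z : V, 2 * (ε * n.choose 2) := by simp [hn]
  obtain ⟨z, -, hz⟩ := exists_lt_of_sum_lt htotal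
  exact ⟨starTournament p z, isStochasticTournament_starTournament hp z,
    isReversible_starTournament hp z, by linarith⟩
end

section
/- Let p be a stochastic tournament on a finite set V, let ε be a real with 0 < ε ≤ 1, and let r be a vertex of V. Suppose every triangle containing r is ε-balanced: for all distinct x, y in V \ {r}, (1+ε)^{-1} ≤ (p x y * p y r * p r x) / (p y x * p r y * p x r) ≤ 1+ε. Then p is an ε-approximate Bradley–Terry model: there exists a : V → ℝ with a x > 0 for all x such that (1+ε)^{-1} * a x / (a x + a y) ≤ p x y ≤ (1+ε) * a x / (a x + a y) for all distinct x, y in V. -/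
lemma key_ineq (u v b c d e ε : ℝ) (hu : 0 < u) (hv : 0 < v) (huv : u + v = 1)
    (hb : 0 < b) (hc : 0 < c) (hd : 0 < d) (he : 0 < e) (hε : 0 < ε)
    (h1 : (1 + ε)⁻¹ ≤ (u * b * e) / (v * c * d))
    (h2 : (u * b * e) / (v * c * d) ≤ 1 + ε) :
    (1 + ε)⁻¹ * (d * c / (d * c + b * e)) ≤ u ∧
    u ≤ (1 + ε) * (d * c / (d * c + b * e)) := by
  have hk : (0:ℝ) < 1 + ε := by linarith
  have hvcd : 0 < v * c * d := by positivity
  have hden : 0 < d * c + b * e := by positivity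
  have h1' : v * c * d ≤ (1 + ε) * (u * b * e) := by
    rw [le_div_iff₀ hvcd, inv_mul_eq_div, div_le_iff₀ hk] at h1
    linarith [h1]
  have h2' : u * b * e ≤ (1 + ε) * (v * c * d) := by
    rw [div_le_iff₀ hvcd] at h2
    linarith [h2]
  constructor
  · rw [inv_mul_le_iff₀ hk, div_le_iff₀ hden]
    nlinarith [mul_pos hu (mul_pos hd hc), mul_pos hε (mul_pos hu (mul_pos hd hc))]
  · rw [show (1+ε)*(d*c/(d*c+b*e)) = ((1+ε)*(d*c))/(d*c+b*e) by ring, le_div_iff₀ hden]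
    nlinarith [mul_pos hu (mul_pos hd hc), mul_pos hε (mul_pos hu (mul_pos hd hc))]

/-- If every triangle through a fixed vertex `r` is `ε`-balanced, then the
stochastic tournament is an `ε`-approximate Bradley–Terry model. -/
theorem eps_balanced_at_vertex_implies_approx_BT {V : Type*} [Fintype V]
    (p : V → V → ℝ)
    (hp : ∀ x y : V, x ≠ y → 0 < p x y ∧ p x y < 1 ∧ p x y + p y x = 1)
    (ε : ℝ) (hε₀ : 0 < ε) (hε₁ : ε ≤ 1)
    (r : V)
    (hr : ∀ x y : V, x ≠ y → x ≠ r → y ≠ r →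
      (1 + ε)⁻¹ ≤ (p x y * p y r * p r x) / (p y x * p r y * p x r) ∧
      (p x y * p y r * p r x) / (p y x * p r y * p x r) ≤ 1 + ε) :
    ∃ a : V → ℝ, (∀ x, 0 < a x) ∧
      ∀ x y : V, x ≠ y →
        (1 + ε)⁻¹ * (a x / (a x + a y)) ≤ p x y ∧
        p x y ≤ (1 + ε) * (a x / (a x + a y)) := by
  classical
  have hk : (0:ℝ) < 1 + ε := by linarith
  have hinv : (1 + ε)⁻¹ ≤ 1 := by rw [inv_le_one₀] <;> linarith
  refine ⟨fun x => if x = r then 1 else p x r / p r x, ?_, ?_⟩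
  · intro x
    by_cases hx : x = r
    · simp [hx]
    · simp only [hx, if_neg, if_false]
      exact div_pos (hp x r hx).1 (hp r x (Ne.symm hx)).1
  · intro x y hxy
    have h1 := hp x y hxy
    have h2 := hp y x (Ne.symm hxy)
    have hu0 : p x y ≠ 0 := ne_of_gt h1.1
    have hv0 : p y x ≠ 0 := ne_of_gt h2.1
    by_cases hx : x = r
    · have hy : y ≠ r := fun h => hxy (hx.trans h.symm)
      subst hx
      beta_reduce
      rw [if_pos rfl, if_neg hy]
      have heq : (1:ℝ) / (1 + p y x / p x y) = p x y := by
        field_simp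
        rw [h1.2.2, div_one]
      rw [heq]
      constructor
      · nlinarith [h1.1]
      · nlinarith [h1.1]
    · by_cases hy : y = r
      · subst hy
        beta_reduce
        rw [if_neg hx, if_pos rfl]
        have heq : (p x y / p y x) / (p x y / p y x + 1) = p x y := by
          field_simp
          rw [h1.2.2, div_one]
        rw [heq]
        constructor
        · nlinarith [h1.1]
        · nlinarith [h1.1]
      · beta_reduce
        rw [if_neg hx, if_neg hy]
        have hyr := hp y r hy
        have hry := hp r y (Ne.symm hy)
        have hxr := hp x r hx
        have hrx := hp r x (Ne.symm hx)
        have hbal := hr x y hxy hx hy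
        have key := key_ineq (p x y) (p y x) (p y r) (p r y) (p x r) (p r x) ε
          h1.1 h2.1 h1.2.2 hyr.1 hry.1 hxr.1 hrx.1 hε₀ hbal.1 hbal.2
        have heq : (p x r / p r x) / (p x r / p r x + p y r / p r y)
            = p x r * p r y / (p x r * p r y + p y r * p r x) := by
          have ha : p x r ≠ 0 := ne_of_gt hxr.1
          have hb : p r x ≠ 0 := ne_of_gt hrx.1
          have hc : p y r ≠ 0 := ne_of_gt hyr.1
          have hd : p r y ≠ 0 := ne_of_gt hry.1
          have hd1 : p x r * p r y + p y r * p r x ≠ 0 :=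
            ne_of_gt (add_pos (mul_pos hxr.1 hry.1) (mul_pos hyr.1 hrx.1))
          have hd2 : p x r / p r x + p y r / p r y ≠ 0 :=
            ne_of_gt (add_pos (div_pos hxr.1 hrx.1) (div_pos hyr.1 hry.1))
          field_simp
        rw [heq]
        exact key
end

section
/- Let p be a stochastic tournament on a finite set V and let ε be a real with 0 < ε ≤ 1. Suppose p is ε-approximately reversible: there exists π : V → ℝ with π x > 0 for all x, ∑_{x ∈ V} π x = 1, and (1+ε)^{-1} ≤ (π x * p x y) / (π y * p y x) ≤ 1+ε for all distinct x, y in V. Then every triangle of p is 7ε-balanced: for all pairwise distinct x, y, z in V, (1+7ε)^{-1} ≤ (p x y * p y z * p z x) / (p y x * p z y * p x z) ≤ 1+7ε. -/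
/-- If a stochastic tournament is `ε`-approximately reversible, then every
triangle is `7ε`-balanced. -/
theorem approx_reversible_implies_approx_balanced {V : Type*} [Fintype V]
    (p : V → V → ℝ)
    (hp : ∀ x y : V, x ≠ y → 0 < p x y ∧ p x y < 1 ∧ p x y + p y x = 1)
    (ε : ℝ) (hε₀ : 0 < ε) (hε₁ : ε ≤ 1)
    (π : V → ℝ) (hπpos : ∀ x, 0 < π x) (hπsum : (∑ x, π x) = 1)
    (hrev : ∀ x y : V, x ≠ y →
      (1 + ε)⁻¹ ≤ (π x * p x y) / (π y * p y x) ∧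
      (π x * p x y) / (π y * p y x) ≤ 1 + ε) :
    ∀ x y z : V, x ≠ y → x ≠ z → y ≠ z →
      (1 + 7 * ε)⁻¹ ≤ (p x y * p y z * p z x) / (p y x * p z y * p x z) ∧
      (p x y * p y z * p z x) / (p y x * p z y * p x z) ≤ 1 + 7 * ε := by
  intro x y z hxy hxz hyz
  have hpxy := (hp x y hxy).1
  have hpyx := (hp y x hxy.symm).1
  have hpyz := (hp y z hyz).1
  have hpzy := (hp z y hyz.symm).1
  have hpzx := (hp z x hxz.symm).1
  have hpxz := (hp x z hxz).1
  have hπx := hπpos x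
  have hπy := hπpos y
  have hπz := hπpos z
  set a := (π x * p x y) / (π y * p y x) with ha
  set b := (π y * p y z) / (π z * p z y) with hb
  set c := (π z * p z x) / (π x * p x z) with hc
  have ha' := hrev x y hxy
  have hb' := hrev y z hyz
  have hc' := hrev z x hxz.symm
  have hapos : 0 < a := by positivity
  have hbpos : 0 < b := by positivity
  have hcpos : 0 < c := by positivity
  have hR : (p x y * p y z * p z x) / (p y x * p z y * p x z) = a * b * c := by
    rw [ha, hb, hc]
    field_simp
  have h1ε : (0:ℝ) < 1 + ε := by linarith
  have hcube : (1 + ε)^3 ≤ 1 + 7 * ε := by nlinarith [sq_nonneg ε, hε₀.le]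
  have h7ε : (0:ℝ) < 1 + 7 * ε := by linarith
  constructor
  · rw [hR]
    have h1 : (1 + ε)⁻¹ * (1 + ε)⁻¹ * (1 + ε)⁻¹ ≤ a * b * c := by
      apply mul_le_mul (mul_le_mul ha'.1 hb'.1 (by positivity) hapos.le)
        hc'.1 (by positivity) (by positivity)
    calc (1 + 7 * ε)⁻¹ ≤ (1 + ε)⁻¹ * (1 + ε)⁻¹ * (1 + ε)⁻¹ := by
          rw [← mul_inv, ← mul_inv]
          apply inv_anti₀ (by positivity)
          nlinarith
      _ ≤ a * b * c := h1
  · rw [hR]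
    calc a * b * c ≤ (1 + ε) * (1 + ε) * (1 + ε) := by
          apply mul_le_mul (mul_le_mul ha'.2 hb'.2 hbpos.le h1ε.le) hc'.2 hcpos.le
            (by positivity)
      _ ≤ 1 + 7 * ε := by nlinarith
end

section
/- Let V be a finite set, let T be a spanning tree on V (a simple graph on vertex set V that is connected and acyclic), and let ŵ : V → V → ℝ be such that for every pair x, y adjacent in T, 0 < ŵ x y < 1 and ŵ x y + ŵ y x = 1. Then there exists a stochastic tournament p on V such that p x y = ŵ x y for every pair x, y adjacent in T, and p is reversible: there exists π : V → ℝ with π x > 0 for all x, ∑_{x ∈ V} π x = 1, and π x * p x y = π y * p y x for all distinct x, y in V. -/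
/-!
On a tree, positive edge weights can be balanced by positive vertex scores `f` with
`f x * w x y = f y * w y x` on every edge: fix a root and let `f x` be the product of the
ratios `w a b / w b a` along the unique path from the root to `x`. The Bradley–Terry
tournament `p x y = f y / (f x + f y)` then agrees with `w` on the edges, and it is reversible
with stationary distribution proportional to `f`.
-/

open Finset

namespace SimpleGraph

variable {V K : Type*} {G : SimpleGraph V}

namespace Walk

variable [Field K]

noncomputable def ratioProd (w : V → V → K) {u v : V} (p : G.Walk u v) : K :=
  (p.darts.map fun d => w d.fst d.snd / w d.snd d.fst).prod

theorem ratioProd_concat (w : V → V → K) {u v x : V} (p : G.Walk u v) (h : G.Adj v x) :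
    (p.concat h).ratioProd w = p.ratioProd w * (w v x / w x v) := by
  simp [ratioProd, darts_concat]

theorem ratioProd_pos [LinearOrder K] [IsStrictOrderedRing K] {w : V → V → K}
    (hw : ∀ x y, G.Adj x y → 0 < w x y) {u v : V} (p : G.Walk u v) : 0 < p.ratioProd w := by
  refine List.prod_pos fun r hr => ?_
  obtain ⟨d, -, rfl⟩ := List.mem_map.mp hr
  exact div_pos (hw _ _ d.adj) (hw _ _ d.adj.symm)

end Walk

theorem IsTree.exists_pos_detailed_balance [Field K] [LinearOrder K] [IsStrictOrderedRing K]
    (hG : G.IsTree) {w : V → V → K} (hw : ∀ x y, G.Adj x y → 0 < w x y) :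
    ∃ f : V → K, (∀ x, 0 < f x) ∧ ∀ x y, G.Adj x y → f x * w x y = f y * w y x := by
  obtain ⟨r⟩ := hG.connected.nonempty
  choose P hP using fun x => (hG.existsUnique_path r x).exists
  refine ⟨fun x => (P x).ratioProd w, fun x => Walk.ratioProd_pos hw _, fun x y h => ?_⟩
  dsimp only
  have hxy := (hw x y h).ne'
  have hyx := (hw y x h.symm).ne'
  by_cases hx : x ∈ (P y).support
  · rw [hG.isAcyclic.path_concat (hP x) (hP y) h hx, Walk.ratioProd_concat]
    field_simp
  · have hy : y ∈ (P x).support :=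
      hG.isAcyclic.mem_support_of_ne_mem_support_of_adj_of_isPath (hP x) (hP y) h hx
    rw [hG.isAcyclic.path_concat (hP y) (hP x) h.symm hy, Walk.ratioProd_concat]
    field_simp

end SimpleGraph

section BradleyTerry

variable {V K : Type*} [Field K]

def bradleyTerry (f : V → K) (x y : V) : K :=
  f y / (f x + f y)

theorem mul_bradleyTerry_comm (f : V → K) (x y : V) :
    f x * bradleyTerry f x y = f y * bradleyTerry f y x := by
  simp only [bradleyTerry, add_comm (f y)]
  ring

theorem bradleyTerry_add_bradleyTerry_swap {f : V → K} {x y : V} (hf : f x + f y ≠ 0) :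
    bradleyTerry f x y + bradleyTerry f y x = 1 := by
  rw [bradleyTerry, bradleyTerry, add_comm (f y), ← add_div, add_comm, div_self hf]

theorem bradleyTerry_eq_of_mul_eq {f : V → K} {w : V → V → K} {x y : V} (hf : f x + f y ≠ 0)
    (hw : w x y + w y x = 1) (hbal : f x * w x y = f y * w y x) :
    bradleyTerry f x y = w x y := by
  rw [bradleyTerry, div_eq_iff hf]
  linear_combination -hbal - f y * hw

variable [LinearOrder K] [IsStrictOrderedRing K] {f : V → K}

theorem bradleyTerry_pos (hf : ∀ x, 0 < f x) (x y : V) : 0 < bradleyTerry f x y :=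
  div_pos (hf y) (add_pos (hf x) (hf y))

theorem bradleyTerry_lt_one (hf : ∀ x, 0 < f x) (x y : V) : bradleyTerry f x y < 1 :=
  (div_lt_one (add_pos (hf x) (hf y))).mpr (lt_add_of_pos_left _ (hf x))

theorem exists_stationary_bradleyTerry [Fintype V] [Nonempty V] (hf : ∀ x, 0 < f x) :
    ∃ π : V → K, (∀ x, 0 < π x) ∧ ∑ x, π x = 1 ∧
      ∀ x y, π x * bradleyTerry f x y = π y * bradleyTerry f y x := by
  have hS : 0 < ∑ x, f x := sum_pos (fun x _ => hf x) univ_nonempty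
  refine ⟨fun x => f x / ∑ x, f x, fun x => div_pos (hf x) hS, ?_, fun x y => ?_⟩
  · rw [← sum_div, div_self hS.ne']
  · rw [div_mul_eq_mul_div, div_mul_eq_mul_div, mul_bradleyTerry_comm]

end BradleyTerry

/-- Any weighting of the edges of a spanning tree extends to a reversible
stochastic tournament on the whole vertex set. -/
theorem spanning_tree_weights_extend_reversible {V : Type*} [Fintype V]
    (T : SimpleGraph V) (hT : T.IsTree)
    (w : V → V → ℝ)
    (hw : ∀ x y : V, T.Adj x y → 0 < w x y ∧ w x y < 1 ∧ w x y + w y x = 1) :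
    ∃ p : V → V → ℝ,
      (∀ x y : V, x ≠ y → 0 < p x y ∧ p x y < 1 ∧ p x y + p y x = 1) ∧
      (∀ x y : V, T.Adj x y → p x y = w x y) ∧
      (∃ π : V → ℝ, (∀ x, 0 < π x) ∧ (∑ x, π x) = 1 ∧
        ∀ x y : V, x ≠ y → π x * p x y = π y * p y x) := by
  obtain ⟨f, hf, hbal⟩ := hT.exists_pos_detailed_balance fun x y h => (hw x y h).1
  have hf_add : ∀ x y, f x + f y ≠ 0 := fun x y => (add_pos (hf x) (hf y)).ne'
  have : Nonempty V := hT.connected.nonempty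
  obtain ⟨π, hπ, hπ_sum, hπ_rev⟩ := exists_stationary_bradleyTerry hf
  refine ⟨bradleyTerry f, fun x y _ => ?_, fun x y h => ?_, π, hπ, hπ_sum, fun x y _ => hπ_rev x y⟩
  · exact ⟨bradleyTerry_pos hf x y, bradleyTerry_lt_one hf x y,
      bradleyTerry_add_bradleyTerry_swap (hf_add x y)⟩
  · exact bradleyTerry_eq_of_mul_eq (hf_add x y) (hw x y h).2.2 (hbal x y h)
end
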